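/- Let N₁ and N₂ be non-degenerate clones-free layered feed-forward neural networks with the same input set V_in. Then an amalgam of N₁ and N₂ exists, and any two amalgams of N₁ and N₂ are extensionally isomorphic. -/

import Mathlib

/-- A general feed-forward neural network (GFNN) with input nodes indexed by `ι`. -/
structure GFNN (ι : Type) where
  V : Type
  [instFintype : Fintype V]
  Adj : V → V → Prop
  wf : WellFounded Adj
  inp : ι → V
  inp_inj : Function.Injective inp
  source_iff : ∀ v, (∀ u, ¬ Adj u v) ↔ v ∈ Set.range inp
  out : Set V
  out_not_inp : ∀ v ∈ out, v ∉ Set.range inp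
  wt : V → V → ℝ
  wt_ne : ∀ u v, Adj u v → wt v u ≠ 0
  bias : V → ℝ

attribute [instance] GFNN.instFintype

/-- The level of a node: sources have level 0, otherwise one plus the maximal parent level. -/
noncomputable def GFNN.lv {ι : Type} (N : GFNN ι) : N.V → ℕ :=
  N.wf.fix (C := fun _ => ℕ) fun v rec =>
    letI : ∀ a b : N.V, Decidable (N.Adj a b) := fun _ _ => Classical.propDecidable _
    Finset.univ.sup fun u => if hu : N.Adj u v then rec u hu + 1 else 0

/-- A layered feed-forward neural network: every edge connects consecutive levels. -/
def GFNN.Layered {ι : Type} (N : GFNN ι) : Prop :=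
  ∀ u v, N.Adj u v → N.lv v = N.lv u + 1

/-- A network is clones-free if no two distinct nodes have the same parent set, the same
bias, and the same incoming weights. -/
def GFNN.ClonesFree {ι : Type} (N : GFNN ι) : Prop :=
  ¬ ∃ v₁ v₂ : N.V, v₁ ≠ v₂ ∧ (∀ u, N.Adj u v₁ ↔ N.Adj u v₂) ∧
      N.bias v₁ = N.bias v₂ ∧ ∀ u, N.Adj u v₁ → N.wt v₁ u = N.wt v₂ u

/-- A network is non-degenerate if every node is an ancestor of some output node. -/
def GFNN.NonDegenerate {ι : Type} (N : GFNN ι) : Prop :=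
  ∀ v : N.V, ∃ w ∈ N.out, Relation.ReflTransGen N.Adj v w

/-- `π` is an extensional isomorphism between two GFNNs with the same input index set. -/
def IsExtIso {ι : Type} (N₁ N₂ : GFNN ι) (π : N₁.V → N₂.V) : Prop :=
  Function.Bijective π ∧
  (∀ i, π (N₁.inp i) = N₂.inp i) ∧
  (π '' N₁.out = N₂.out) ∧
  (∀ u v, N₁.Adj u v ↔ N₂.Adj (π u) (π v)) ∧
  (∀ u v, N₁.Adj u v → N₂.wt (π v) (π u) = N₁.wt v u) ∧
  (∀ v, v ∉ Set.range N₁.inp → N₂.bias (π v) = N₁.bias v)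

/-- `A` (with injections `π₁`, `π₂`) is a proto-amalgam of `N₁` and `N₂`: a non-degenerate
layered network such that each `N_j` is extensionally isomorphic via `π_j` to the ancestor
subnetwork of `π_j(V_out^j)` in `A`, the nodes of `A` are exactly `π₁(V¹) ∪ π₂(V²)`, and
`V_out^A = π₁(V_out¹) ∪ π₂(V_out²)`. -/
def IsProtoAmalgam {ι : Type} (N₁ N₂ A : GFNN ι)
    (π₁ : N₁.V → A.V) (π₂ : N₂.V → A.V) : Prop :=
  A.Layered ∧ A.NonDegenerate ∧
  Function.Injective π₁ ∧ Function.Injective π₂ ∧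
  (∀ i, π₁ (N₁.inp i) = A.inp i) ∧ (∀ i, π₂ (N₂.inp i) = A.inp i) ∧
  (∀ u v, N₁.Adj u v ↔ A.Adj (π₁ u) (π₁ v)) ∧
  (∀ u v, N₂.Adj u v ↔ A.Adj (π₂ u) (π₂ v)) ∧
  (∀ u v, N₁.Adj u v → A.wt (π₁ v) (π₁ u) = N₁.wt v u) ∧
  (∀ u v, N₂.Adj u v → A.wt (π₂ v) (π₂ u) = N₂.wt v u) ∧
  (∀ v, v ∉ Set.range N₁.inp → A.bias (π₁ v) = N₁.bias v) ∧
  (∀ v, v ∉ Set.range N₂.inp → A.bias (π₂ v) = N₂.bias v) ∧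
  (Set.range π₁ = {x : A.V | ∃ s ∈ N₁.out, Relation.ReflTransGen A.Adj x (π₁ s)}) ∧
  (Set.range π₂ = {x : A.V | ∃ s ∈ N₂.out, Relation.ReflTransGen A.Adj x (π₂ s)}) ∧
  (Set.range π₁ ∪ Set.range π₂ = Set.univ) ∧
  (A.out = π₁ '' N₁.out ∪ π₂ '' N₂.out)

/-- An amalgam is a clones-free proto-amalgam. -/
def IsAmalgam {ι : Type} (N₁ N₂ A : GFNN ι)
    (π₁ : N₁.V → A.V) (π₂ : N₂.V → A.V) : Prop :=
  IsProtoAmalgam N₁ N₂ A π₁ π₂ ∧ A.ClonesFree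

namespace GFNN
variable {ι : Type} (N : GFNN ι)

open Classical in
lemma lv_spec (v : N.V) :
    N.lv v = Finset.univ.sup fun u => if N.Adj u v then N.lv u + 1 else 0 := by
  show N.wf.fix _ v = _
  rw [WellFounded.fix_eq]
  rfl

lemma lv_lt {u v : N.V} (h : N.Adj u v) : N.lv u < N.lv v := by
  classical
  have := N.lv_spec v
  have h2 : N.lv u + 1 ≤ N.lv v := by
    rw [this]
    have := Finset.le_sup (f := fun u => if N.Adj u v then N.lv u + 1 else 0)
      (Finset.mem_univ u)
    simpa [h] using this
  omega

lemma lv_le {v : N.V} {m : ℕ} (h : ∀ u, N.Adj u v → N.lv u + 1 ≤ m) : N.lv v ≤ m := by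
  classical
  rw [N.lv_spec v]
  refine Finset.sup_le fun u _ => ?_
  by_cases hu : N.Adj u v
  · simpa [hu] using h u hu
  · simp [hu]

lemma lv_source {v : N.V} (h : ∀ u, ¬ N.Adj u v) : N.lv v = 0 :=
  Nat.le_zero.mp (N.lv_le fun u hu => absurd hu (h u))

lemma exists_parent_of_lv_pos {v : N.V} (h : N.lv v ≠ 0) :
    ∃ u, N.Adj u v ∧ N.lv u + 1 = N.lv v := by
  classical
  obtain ⟨u, _, hu⟩ := Finset.exists_mem_eq_sup (Finset.univ : Finset N.V)
    ⟨v, Finset.mem_univ v⟩ (fun u => if N.Adj u v then N.lv u + 1 else 0)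
  rw [← N.lv_spec v] at hu
  by_cases ha : N.Adj u v
  · exact ⟨u, ha, by simpa [ha] using hu.symm⟩
  · simp [ha] at hu; exact absurd hu h

lemma lv_eq_zero_iff {v : N.V} : N.lv v = 0 ↔ v ∈ Set.range N.inp := by
  constructor
  · intro h
    rw [← N.source_iff]
    intro u hu
    exact absurd (N.lv_lt hu) (by omega)
  · intro h
    exact N.lv_source ((N.source_iff v).mpr h)

lemma lv_eq_of {ι' : Type} (M : GFNN ι') {x : N.V} {y : M.V}
    (h1 : ∀ u, N.Adj u x → ∃ v, M.Adj v y ∧ N.lv u = M.lv v)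
    (h2 : ∀ v, M.Adj v y → ∃ u, N.Adj u x ∧ N.lv u = M.lv v) :
    N.lv x = M.lv y := by
  refine le_antisymm (N.lv_le fun u hu => ?_) (M.lv_le fun v hv => ?_)
  · obtain ⟨v, hv, he⟩ := h1 u hu
    have := M.lv_lt hv; omega
  · obtain ⟨u, hu, he⟩ := h2 v hv
    have := N.lv_lt hu; omega

end GFNN

namespace GFNN
variable {ι : Type}

/-- `Match n v₁ v₂`: the nodes compute the same function, at level `n`. -/
def Match (N₁ N₂ : GFNN ι) : ℕ → N₁.V → N₂.V → Prop
  | 0, v₁, v₂ => ∃ i, v₁ = N₁.inp i ∧ v₂ = N₂.inp i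
  | n+1, v₁, v₂ => N₁.lv v₁ = n+1 ∧ N₂.lv v₂ = n+1 ∧ N₁.bias v₁ = N₂.bias v₂ ∧
      (∀ u₁, N₁.Adj u₁ v₁ → ∃ u₂, N₂.Adj u₂ v₂ ∧ Match N₁ N₂ n u₁ u₂ ∧
        N₁.wt v₁ u₁ = N₂.wt v₂ u₂) ∧
      (∀ u₂, N₂.Adj u₂ v₂ → ∃ u₁, N₁.Adj u₁ v₁ ∧ Match N₁ N₂ n u₁ u₂ ∧
        N₁.wt v₁ u₁ = N₂.wt v₂ u₂)

variable {N₁ N₂ : GFNN ι}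

lemma Match.lv {n : ℕ} {v₁ : N₁.V} {v₂ : N₂.V} (h : Match N₁ N₂ n v₁ v₂) :
    N₁.lv v₁ = n ∧ N₂.lv v₂ = n := by
  cases n with
  | zero =>
    obtain ⟨i, h1, h2⟩ := h
    constructor
    · rw [h1, N₁.lv_eq_zero_iff]; exact ⟨i, rfl⟩
    · rw [h2, N₂.lv_eq_zero_iff]; exact ⟨i, rfl⟩
  | succ n => exact ⟨h.1, h.2.1⟩

lemma Match.symm : ∀ {n : ℕ} {v₁ : N₁.V} {v₂ : N₂.V},
    Match N₁ N₂ n v₁ v₂ → Match N₂ N₁ n v₂ v₁ := by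
  intro n
  induction n with
  | zero => rintro v₁ v₂ ⟨i, h1, h2⟩; exact ⟨i, h2, h1⟩
  | succ n ih =>
    rintro v₁ v₂ ⟨hl1, hl2, hb, hf, hg⟩
    refine ⟨hl2, hl1, hb.symm, ?_, ?_⟩
    · intro u₂ hu₂
      obtain ⟨u₁, h1, h2, h3⟩ := hg u₂ hu₂
      exact ⟨u₁, h1, ih h2, h3.symm⟩
    · intro u₁ hu₁
      obtain ⟨u₂, h1, h2, h3⟩ := hf u₁ hu₁
      exact ⟨u₂, h1, ih h2, h3.symm⟩

/-- step lemma for uniqueness -/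
lemma Match.uniq_step {n : ℕ} (h₂cf : N₂.ClonesFree)
    (IHr : ∀ (u₁ : N₁.V) (u₂ u₂' : N₂.V), Match N₁ N₂ n u₁ u₂ → Match N₁ N₂ n u₁ u₂' → u₂ = u₂')
    (IHl : ∀ (u₁ u₁' : N₁.V) (u₂ : N₂.V), Match N₁ N₂ n u₁ u₂ → Match N₁ N₂ n u₁' u₂ → u₁ = u₁')
    {v₁ : N₁.V} {v₂ v₂' : N₂.V}
    (h : Match N₁ N₂ (n+1) v₁ v₂) (h' : Match N₁ N₂ (n+1) v₁ v₂') : v₂ = v₂' := by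
  by_contra hne
  obtain ⟨hl1, hl2, hb, hf, hg⟩ := h
  obtain ⟨hl1', hl2', hb', hf', hg'⟩ := h'
  have hpar : ∀ u₂, N₂.Adj u₂ v₂ ↔ N₂.Adj u₂ v₂' := by
    intro u₂
    constructor
    · intro hu
      obtain ⟨u₁, a1, a2, a3⟩ := hg u₂ hu
      obtain ⟨u₂'', b1, b2, b3⟩ := hf' u₁ a1
      rwa [IHr u₁ u₂ u₂'' a2 b2]
    · intro hu
      obtain ⟨u₁, a1, a2, a3⟩ := hg' u₂ hu
      obtain ⟨u₂'', b1, b2, b3⟩ := hf u₁ a1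
      rwa [← IHr u₁ u₂'' u₂ b2 a2]
  refine h₂cf ⟨v₂, v₂', hne, hpar, hb.symm.trans hb', ?_⟩
  intro u₂ hu
  obtain ⟨u₁, a1, a2, a3⟩ := hg u₂ hu
  obtain ⟨u₁', b1, b2, b3⟩ := hg' u₂ ((hpar u₂).mp hu)
  have : u₁ = u₁' := IHl u₁ u₁' u₂ a2 b2
  rw [← this] at b3
  rw [← a3, ← b3]

lemma Match.uniq (h₁cf : N₁.ClonesFree) (h₂cf : N₂.ClonesFree) : ∀ n : ℕ,
    (∀ (u₁ : N₁.V) (u₂ u₂' : N₂.V), Match N₁ N₂ n u₁ u₂ → Match N₁ N₂ n u₁ u₂' → u₂ = u₂') ∧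
    (∀ (u₁ u₁' : N₁.V) (u₂ : N₂.V), Match N₁ N₂ n u₁ u₂ → Match N₁ N₂ n u₁' u₂ → u₁ = u₁') := by
  intro n
  induction n with
  | zero =>
    constructor
    · rintro u₁ u₂ u₂' ⟨i, rfl, rfl⟩ ⟨j, hj, rfl⟩
      rw [N₁.inp_inj hj]
    · rintro u₁ u₁' u₂ ⟨i, rfl, rfl⟩ ⟨j, rfl, hj⟩
      rw [N₂.inp_inj hj]
  | succ n ih =>
    constructor
    · exact fun u₁ u₂ u₂' => Match.uniq_step h₂cf ih.1 ih.2
    · intro u₁ u₁' u₂ h h'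
      exact Match.uniq_step (N₂ := N₁) h₁cf
        (fun a b b' hab hab' => ih.2 b b' a hab.symm hab'.symm)
        (fun a a' b hab ha'b => ih.1 b a a' hab.symm ha'b.symm)
        h.symm h'.symm

end GFNN

namespace GFNN
variable {ι : Type} {N₁ N₂ : GFNN ι}

/-- A node of `N₂` is matched if some node of `N₁` computes the same function. -/
def Matched (N₁ : GFNN ι) {N₂ : GFNN ι} (v₂ : N₂.V) : Prop :=
  ∃ (n : ℕ) (v₁ : N₁.V), Match N₁ N₂ n v₁ v₂

lemma Match.n_eq {n : ℕ} {v₁ : N₁.V} {v₂ : N₂.V} (h : Match N₁ N₂ n v₁ v₂) :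
    n = N₂.lv v₂ := (h.lv.2).symm

/-- The mate in `N₁` of a matched node of `N₂`. -/
noncomputable def mate {v₂ : N₂.V} (h : Matched N₁ v₂) : N₁.V :=
  h.choose_spec.choose

lemma mate_spec {v₂ : N₂.V} (h : Matched N₁ v₂) :
    Match N₁ N₂ (N₂.lv v₂) (mate h) v₂ := by
  have h2 : ∃ n, Match N₁ N₂ n (mate h) v₂ := ⟨_, h.choose_spec.choose_spec⟩
  obtain ⟨n, hm⟩ := h2
  rwa [hm.n_eq] at hm

lemma mate_eq (h₁cf : N₁.ClonesFree) (h₂cf : N₂.ClonesFree) {v₂ : N₂.V} (h : Matched N₁ v₂)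
    {n : ℕ} {v₁ : N₁.V} (hm : Match N₁ N₂ n v₁ v₂) : mate h = v₁ := by
  have h1 := mate_spec h
  rw [hm.n_eq] at hm
  exact (Match.uniq h₁cf h₂cf (N₂.lv v₂)).2 _ _ _ h1 hm

/-- carrier of the canonical amalgam -/
def AV (N₁ N₂ : GFNN ι) : Type := N₁.V ⊕ {v₂ : N₂.V // ¬ Matched N₁ v₂}

noncomputable instance : Fintype (AV N₁ N₂) := by
  unfold AV
  letI : DecidablePred (fun v₂ : N₂.V => ¬ Matched N₁ v₂) := fun _ => Classical.propDecidable _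
  infer_instance

open Classical in
/-- the embedding of `N₂` into the amalgam carrier -/
noncomputable def emb₂ (v₂ : N₂.V) : AV N₁ N₂ :=
  if h : Matched N₁ v₂ then Sum.inl (mate h) else Sum.inr ⟨v₂, h⟩

lemma emb₂_matched {v₂ : N₂.V} (h : Matched N₁ v₂) : emb₂ v₂ = Sum.inl (mate h) := by
  unfold emb₂; exact dif_pos h

lemma emb₂_not_matched {v₂ : N₂.V} (h : ¬ Matched N₁ v₂) :
    emb₂ (N₁ := N₁) v₂ = Sum.inr ⟨v₂, h⟩ := by
  unfold emb₂; exact dif_neg h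

lemma emb₂_eq_inl_iff (h₁cf : N₁.ClonesFree) (h₂cf : N₂.ClonesFree) {v₂ : N₂.V} {v₁ : N₁.V} :
    emb₂ v₂ = Sum.inl v₁ ↔ ∃ n, Match N₁ N₂ n v₁ v₂ := by
  constructor
  · intro h
    by_cases hm : Matched N₁ v₂
    · rw [emb₂_matched hm] at h
      obtain rfl : mate hm = v₁ := Sum.inl.inj h
      exact ⟨_, mate_spec hm⟩
    · rw [emb₂_not_matched hm] at h; exact absurd h (by simp)
  · rintro ⟨n, hn⟩
    have hm : Matched N₁ v₂ := ⟨n, v₁, hn⟩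
    rw [emb₂_matched hm, mate_eq h₁cf h₂cf hm hn]

lemma emb₂_inj (h₁cf : N₁.ClonesFree) (h₂cf : N₂.ClonesFree) :
    Function.Injective (emb₂ (N₁ := N₁) (N₂ := N₂)) := by
  intro a b hab
  by_cases ha : Matched N₁ a <;> by_cases hb : Matched N₁ b
  · rw [emb₂_matched ha, emb₂_matched hb] at hab
    have h1 := mate_spec ha
    have h2 := mate_spec hb
    rw [Sum.inl.inj hab] at h1
    have hlv : N₂.lv a = N₂.lv b := by
      rw [← h1.lv.1, ← h2.lv.1]
    rw [hlv] at h1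
    exact (Match.uniq h₁cf h₂cf (N₂.lv b)).1 _ _ _ h1 h2
  · rw [emb₂_matched ha, emb₂_not_matched hb] at hab; exact absurd hab (by simp)
  · rw [emb₂_not_matched ha, emb₂_matched hb] at hab; exact absurd hab (by simp)
  · rw [emb₂_not_matched ha, emb₂_not_matched hb] at hab
    injection hab with h
    exact congrArg Subtype.val h

lemma emb₂_inp (h₁cf : N₁.ClonesFree) (h₂cf : N₂.ClonesFree) (i : ι) :
    emb₂ (N₂.inp i) = Sum.inl (N₁.inp i) :=
  (emb₂_eq_inl_iff h₁cf h₂cf).mpr ⟨0, i, rfl, rfl⟩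

/-- level function on the carrier -/
noncomputable def lvA : AV N₁ N₂ → ℕ := Sum.elim N₁.lv fun v => N₂.lv v.1

lemma lvA_emb₂ (v₂ : N₂.V) : lvA (emb₂ (N₁ := N₁) v₂) = N₂.lv v₂ := by
  by_cases h : Matched N₁ v₂
  · rw [emb₂_matched h]; exact (mate_spec h).lv.1
  · rw [emb₂_not_matched h]; rfl

/-- adjacency on the carrier -/
def adjA (N₁ N₂ : GFNN ι) : AV N₁ N₂ → AV N₁ N₂ → Prop := fun x y =>
  (∃ u v, N₁.Adj u v ∧ x = Sum.inl u ∧ y = Sum.inl v) ∨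
  (∃ u v, N₂.Adj u v ∧ x = emb₂ u ∧ y = emb₂ v)

end GFNN

namespace GFNN
variable {ι : Type} {N₁ N₂ : GFNN ι}

lemma lv_pos_of_parent {N : GFNN ι} {u v : N.V} (h : N.Adj u v) : N.lv v ≠ 0 := by
  have := N.lv_lt h; omega

lemma Match.succ_of_parent₂ {n : ℕ} {v₁ : N₁.V} {v₂ : N₂.V} (h : Match N₁ N₂ n v₁ v₂)
    {u₂ : N₂.V} (hu : N₂.Adj u₂ v₂) : ∃ k, n = k + 1 := by
  cases n with
  | zero => exact absurd h.lv.2 (lv_pos_of_parent hu)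
  | succ k => exact ⟨k, rfl⟩

lemma Match.succ_of_parent₁ {n : ℕ} {v₁ : N₁.V} {v₂ : N₂.V} (h : Match N₁ N₂ n v₁ v₂)
    {u₁ : N₁.V} (hu : N₁.Adj u₁ v₁) : ∃ k, n = k + 1 := by
  cases n with
  | zero => exact absurd h.lv.1 (lv_pos_of_parent hu)
  | succ k => exact ⟨k, rfl⟩

/-- weights are compatible across a matched pair of edges -/
lemma wt_compat (h₁cf : N₁.ClonesFree) (h₂cf : N₂.ClonesFree) {u₁ v₁ : N₁.V} {u₂ v₂ : N₂.V}
    (hA₁ : N₁.Adj u₁ v₁) (hA₂ : N₂.Adj u₂ v₂)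
    (hv : emb₂ v₂ = Sum.inl v₁) (hu : emb₂ u₂ = Sum.inl u₁) :
    N₁.wt v₁ u₁ = N₂.wt v₂ u₂ := by
  obtain ⟨n, hm⟩ := (emb₂_eq_inl_iff h₁cf h₂cf).mp hv
  obtain ⟨m, hm'⟩ := (emb₂_eq_inl_iff h₁cf h₂cf).mp hu
  obtain ⟨k, rfl⟩ := hm.succ_of_parent₂ hA₂
  obtain ⟨_, _, _, _, hg⟩ := hm
  obtain ⟨u₁', ha, hb, hc⟩ := hg u₂ hA₂
  have hk : m = k := by rw [hm'.n_eq, hb.n_eq]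
  rw [hk] at hm'
  rwa [(Match.uniq h₁cf h₂cf k).2 _ _ _ hb hm'] at hc

/-- L1: parents of an `inl` node -/
lemma adjA_inl_iff (h₁cf : N₁.ClonesFree) (h₂cf : N₂.ClonesFree) {x : AV N₁ N₂} {v₁ : N₁.V} :
    adjA N₁ N₂ x (Sum.inl v₁) ↔ ∃ u₁, N₁.Adj u₁ v₁ ∧ x = Sum.inl u₁ := by
  constructor
  · rintro (⟨u, v, hA, rfl, hv⟩ | ⟨u, v, hA, rfl, hv⟩)
    · exact ⟨u, Sum.inl.inj hv ▸ hA, rfl⟩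
    · obtain ⟨n, hm⟩ := (emb₂_eq_inl_iff h₁cf h₂cf).mp hv.symm
      obtain ⟨k, rfl⟩ := hm.succ_of_parent₂ hA
      obtain ⟨_, _, _, _, hg⟩ := hm
      obtain ⟨u₁, ha, hb, _⟩ := hg u hA
      exact ⟨u₁, ha, (emb₂_eq_inl_iff h₁cf h₂cf).mpr ⟨k, hb⟩⟩
  · rintro ⟨u₁, hA, rfl⟩
    exact Or.inl ⟨u₁, v₁, hA, rfl, rfl⟩

/-- L2: parents of an `emb₂` node -/
lemma adjA_emb₂_iff (h₁cf : N₁.ClonesFree) (h₂cf : N₂.ClonesFree) {x : AV N₁ N₂} {v₂ : N₂.V} :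
    adjA N₁ N₂ x (emb₂ v₂) ↔ ∃ u₂, N₂.Adj u₂ v₂ ∧ x = emb₂ u₂ := by
  constructor
  · intro h
    by_cases hm : Matched N₁ v₂
    · rw [emb₂_matched hm] at h
      obtain ⟨u₁, hA, rfl⟩ := (adjA_inl_iff h₁cf h₂cf).mp h
      have hv : emb₂ v₂ = Sum.inl (mate hm) := emb₂_matched hm
      obtain ⟨n, hmm⟩ := (emb₂_eq_inl_iff h₁cf h₂cf).mp hv
      obtain ⟨k, rfl⟩ := hmm.succ_of_parent₁ hA
      obtain ⟨_, _, _, hf, _⟩ := hmm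
      obtain ⟨u₂, ha, hb, _⟩ := hf u₁ hA
      exact ⟨u₂, ha, ((emb₂_eq_inl_iff h₁cf h₂cf).mpr ⟨k, hb⟩).symm⟩
    · rw [emb₂_not_matched hm] at h
      rcases h with ⟨u, v, hA, rfl, hv⟩ | ⟨u, v, hA, rfl, hv⟩
      · exact absurd hv (by simp)
      · have : v = v₂ := by
          by_cases hmv : Matched N₁ v
          · rw [emb₂_matched hmv] at hv; exact absurd hv (by simp)
          · rw [emb₂_not_matched hmv] at hv
            injection hv with h'; exact (congrArg Subtype.val h').symm
        exact ⟨u, this ▸ hA, rfl⟩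
  · rintro ⟨u₂, hA, rfl⟩
    exact Or.inr ⟨u₂, v₂, hA, rfl, rfl⟩

/-- the defining property of the amalgam weight `w` on the edge `x → y` -/
def wtP (N₁ N₂ : GFNN ι) (y x : AV N₁ N₂) (w : ℝ) : Prop :=
  (∃ u v, N₁.Adj u v ∧ x = Sum.inl u ∧ y = Sum.inl v ∧ w = N₁.wt v u) ∨
  (∃ u v, N₂.Adj u v ∧ x = emb₂ u ∧ y = emb₂ v ∧ w = N₂.wt v u)

lemma wtP_unique (h₁cf : N₁.ClonesFree) (h₂cf : N₂.ClonesFree) {y x : AV N₁ N₂} {w w' : ℝ} (h : wtP N₁ N₂ y x w)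
    (h' : wtP N₁ N₂ y x w') : w = w' := by
  rcases h with ⟨u, v, hA, rfl, hy, rfl⟩ | ⟨u, v, hA, rfl, hy, rfl⟩ <;>
    rcases h' with ⟨u', v', hA', hx', hy', rfl⟩ | ⟨u', v', hA', hx', hy', rfl⟩
  · rw [← Sum.inl.inj hx', ← Sum.inl.inj (hy ▸ hy' : (Sum.inl v : AV N₁ N₂) = Sum.inl v')]
  · exact wt_compat h₁cf h₂cf hA hA' (hy ▸ hy').symm hx'.symm
  · exact (wt_compat h₁cf h₂cf hA' hA (hy ▸ hy') hx').symm
  · rw [← emb₂_inj h₁cf h₂cf hx', ← emb₂_inj h₁cf h₂cf (hy ▸ hy' : emb₂ v = emb₂ v')]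

open Classical in
/-- the weight function of the amalgam -/
noncomputable def wtA (N₁ N₂ : GFNN ι) : AV N₁ N₂ → AV N₁ N₂ → ℝ := fun y x =>
  if h : ∃ w, wtP N₁ N₂ y x w then h.choose else 1

lemma wtA_eq (h₁cf : N₁.ClonesFree) (h₂cf : N₂.ClonesFree) {y x : AV N₁ N₂} {w : ℝ} (hw : wtP N₁ N₂ y x w) : wtA N₁ N₂ y x = w := by
  unfold wtA
  rw [dif_pos ⟨w, hw⟩]
  exact wtP_unique h₁cf h₂cf (Exists.choose_spec (⟨w, hw⟩ : ∃ w, wtP N₁ N₂ y x w)) hw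

lemma wtA_inl (h₁cf : N₁.ClonesFree) (h₂cf : N₂.ClonesFree) {u v : N₁.V} (hA : N₁.Adj u v) :
    wtA N₁ N₂ (Sum.inl v) (Sum.inl u) = N₁.wt v u :=
  wtA_eq h₁cf h₂cf (Or.inl ⟨u, v, hA, rfl, rfl, rfl⟩)

lemma wtA_emb₂ (h₁cf : N₁.ClonesFree) (h₂cf : N₂.ClonesFree) {u v : N₂.V} (hA : N₂.Adj u v) :
    wtA N₁ N₂ (emb₂ v) (emb₂ u) = N₂.wt v u :=
  wtA_eq h₁cf h₂cf (Or.inr ⟨u, v, hA, rfl, rfl, rfl⟩)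

/-- The canonical amalgam. -/
noncomputable def amal (N₁ N₂ : GFNN ι) (h₁cf : N₁.ClonesFree) (h₂cf : N₂.ClonesFree) :
    GFNN ι where
  V := AV N₁ N₂
  Adj := adjA N₁ N₂
  wf := by
    refine Subrelation.wf (r := fun a b : AV N₁ N₂ => lvA a < lvA b) ?_ ?_
    · rintro x y (⟨u, v, hA, rfl, rfl⟩ | ⟨u, v, hA, rfl, rfl⟩)
      · exact N₁.lv_lt hA
      · rw [lvA_emb₂, lvA_emb₂]; exact N₂.lv_lt hA
    · exact (measure lvA).wf
  inp i := Sum.inl (N₁.inp i)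
  inp_inj := fun i j h => N₁.inp_inj (Sum.inl.inj h)
  source_iff := by
    rintro (v₁ | ⟨v₂, hun⟩)
    · constructor
      · intro h
        have : ∀ u, ¬ N₁.Adj u v₁ := fun u hu => h (Sum.inl u) (Or.inl ⟨u, v₁, hu, rfl, rfl⟩)
        obtain ⟨i, hi⟩ := (N₁.source_iff v₁).mp this
        exact ⟨i, congrArg Sum.inl hi⟩
      · rintro ⟨i, hi⟩
        have hv : v₁ = N₁.inp i := Sum.inl.inj hi.symm
        subst hv
        rintro u (⟨u', v', hA, rfl, hv⟩ | ⟨u', v', hA, rfl, hv⟩)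
        · obtain rfl : v' = N₁.inp i := Sum.inl.inj hv.symm
          exact (N₁.source_iff (N₁.inp i)).mpr ⟨i, rfl⟩ u' hA
        · obtain ⟨n, hm⟩ := (emb₂_eq_inl_iff h₁cf h₂cf).mp hv.symm
          have hn0 : n = 0 := by
            have := hm.lv.1
            have h0 : N₁.lv (N₁.inp i) = 0 := N₁.lv_eq_zero_iff.mpr ⟨i, rfl⟩
            omega
          subst hn0
          obtain ⟨j, _, rfl⟩ := hm
          exact (N₂.source_iff (N₂.inp j)).mpr ⟨j, rfl⟩ u' hA
    · constructor
      · intro h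
        exfalso
        have hns : v₂ ∉ Set.range N₂.inp := by
          rintro ⟨i, rfl⟩
          exact hun ⟨0, N₁.inp i, i, rfl, rfl⟩
        have : ¬ ∀ u, ¬ N₂.Adj u v₂ := fun hall => hns ((N₂.source_iff v₂).mp hall)
        push_neg at this
        obtain ⟨u, hu⟩ := this
        exact h (emb₂ u) (by
          rw [show (Sum.inr ⟨v₂, hun⟩ : AV N₁ N₂) = emb₂ v₂ from (emb₂_not_matched hun).symm]
          exact Or.inr ⟨u, v₂, hu, rfl, rfl⟩)
      · rintro ⟨i, hi⟩
        exact absurd hi.symm (by simp)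
  out := Sum.inl '' N₁.out ∪ emb₂ '' N₂.out
  out_not_inp := by
    rintro v (⟨w, hw, rfl⟩ | ⟨w, hw, rfl⟩) ⟨i, hi⟩
    · exact N₁.out_not_inp w hw ⟨i, Sum.inl.inj hi⟩
    · obtain ⟨n, hm⟩ := (emb₂_eq_inl_iff h₁cf h₂cf).mp hi.symm
      have hn0 : n = 0 := by
        have := hm.lv.1
        have h0 : N₁.lv (N₁.inp i) = 0 := N₁.lv_eq_zero_iff.mpr ⟨i, rfl⟩
        omega
      subst hn0
      obtain ⟨j, _, rfl⟩ := hm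
      exact N₂.out_not_inp _ hw ⟨j, rfl⟩
  wt := wtA N₁ N₂
  wt_ne := by
    rintro x y (⟨u, v, hA, rfl, rfl⟩ | ⟨u, v, hA, rfl, rfl⟩)
    · rw [wtA_inl h₁cf h₂cf hA]; exact N₁.wt_ne u v hA
    · rw [wtA_emb₂ h₁cf h₂cf hA]; exact N₂.wt_ne u v hA
  bias := Sum.elim N₁.bias fun v => N₂.bias v.1

end GFNN

namespace GFNN
variable {ι : Type} {N₁ N₂ : GFNN ι}

lemma amal_lv (h₁cf : N₁.ClonesFree) (h₂cf : N₂.ClonesFree) :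
    ∀ x, (amal N₁ N₂ h₁cf h₂cf).lv x = lvA x := by
  suffices H : ∀ (n : ℕ) (x : AV N₁ N₂), lvA x = n → (amal N₁ N₂ h₁cf h₂cf).lv x = lvA x from
    fun x => H (lvA x) x rfl
  intro n
  induction n using Nat.strong_induction_on with
  | _ n ih =>
    rintro (v₁ | ⟨v₂, hun⟩) hx
    · show (amal N₁ N₂ h₁cf h₂cf).lv (Sum.inl v₁) = N₁.lv v₁
      refine GFNN.lv_eq_of _ N₁ (fun u hu => ?_) (fun w hw => ?_)
      · obtain ⟨u₁, hA, rfl⟩ := (adjA_inl_iff h₁cf h₂cf).mp hu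
        refine ⟨u₁, hA, ?_⟩
        have hlt : lvA (Sum.inl u₁ : AV N₁ N₂) < n := hx ▸ N₁.lv_lt hA
        exact ih _ hlt _ rfl
      · refine ⟨Sum.inl w, Or.inl ⟨w, v₁, hw, rfl, rfl⟩, ?_⟩
        have hlt : lvA (Sum.inl w : AV N₁ N₂) < n := hx ▸ N₁.lv_lt hw
        exact ih _ hlt _ rfl
    · rw [show (Sum.inr ⟨v₂, hun⟩ : AV N₁ N₂) = emb₂ v₂ from (emb₂_not_matched hun).symm] at hx ⊢
      rw [lvA_emb₂] at hx ⊢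
      show (amal N₁ N₂ h₁cf h₂cf).lv (emb₂ v₂) = N₂.lv v₂
      refine GFNN.lv_eq_of _ N₂ (fun u hu => ?_) (fun w hw => ?_)
      · obtain ⟨u₂, hA, rfl⟩ := (adjA_emb₂_iff h₁cf h₂cf).mp hu
        refine ⟨u₂, hA, ?_⟩
        have hlt : lvA (emb₂ (N₁ := N₁) u₂) < n := by rw [lvA_emb₂]; exact hx ▸ N₂.lv_lt hA
        exact (ih _ hlt _ rfl).trans (lvA_emb₂ u₂)
      · refine ⟨emb₂ w, Or.inr ⟨w, v₂, hw, rfl, rfl⟩, ?_⟩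
        have hlt : lvA (emb₂ (N₁ := N₁) w) < n := by rw [lvA_emb₂]; exact hx ▸ N₂.lv_lt hw
        exact (ih _ hlt _ rfl).trans (lvA_emb₂ w)

lemma amal_lv_inl (h₁cf : N₁.ClonesFree) (h₂cf : N₂.ClonesFree) (v : N₁.V) :
    (amal N₁ N₂ h₁cf h₂cf).lv (Sum.inl v) = N₁.lv v := amal_lv h₁cf h₂cf _

lemma amal_lv_emb₂ (h₁cf : N₁.ClonesFree) (h₂cf : N₂.ClonesFree) (v : N₂.V) :
    (amal N₁ N₂ h₁cf h₂cf).lv (emb₂ v) = N₂.lv v :=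
  (amal_lv h₁cf h₂cf _).trans (lvA_emb₂ v)

lemma amal_layered (h₁cf : N₁.ClonesFree) (h₂cf : N₂.ClonesFree)
    (h₁L : N₁.Layered) (h₂L : N₂.Layered) : (amal N₁ N₂ h₁cf h₂cf).Layered := by
  rintro x y (⟨u, v, hA, rfl, rfl⟩ | ⟨u, v, hA, rfl, rfl⟩)
  · rw [amal_lv_inl, amal_lv_inl]; exact h₁L u v hA
  · rw [amal_lv_emb₂, amal_lv_emb₂]; exact h₂L u v hA

lemma amal_nondeg (h₁cf : N₁.ClonesFree) (h₂cf : N₂.ClonesFree)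
    (h₁nd : N₁.NonDegenerate) (h₂nd : N₂.NonDegenerate) :
    (amal N₁ N₂ h₁cf h₂cf).NonDegenerate := by
  rintro (v₁ | ⟨v₂, hun⟩)
  · obtain ⟨w, hw, hp⟩ := h₁nd v₁
    exact ⟨Sum.inl w, Or.inl ⟨w, hw, rfl⟩,
      hp.lift Sum.inl fun a b h => Or.inl ⟨a, b, h, rfl, rfl⟩⟩
  · obtain ⟨w, hw, hp⟩ := h₂nd v₂
    refine ⟨emb₂ w, Or.inr ⟨w, hw, rfl⟩, ?_⟩
    rw [show (Sum.inr ⟨v₂, hun⟩ : AV N₁ N₂) = emb₂ v₂ from (emb₂_not_matched hun).symm]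
    exact hp.lift emb₂ fun a b h => Or.inr ⟨a, b, h, rfl, rfl⟩

lemma amal_range_inl (h₁cf : N₁.ClonesFree) (h₂cf : N₂.ClonesFree)
    (h₁nd : N₁.NonDegenerate) :
    Set.range (Sum.inl : N₁.V → AV N₁ N₂) =
      {x : AV N₁ N₂ | ∃ s ∈ N₁.out,
        Relation.ReflTransGen (amal N₁ N₂ h₁cf h₂cf).Adj x (Sum.inl s)} := by
  ext x
  constructor
  · rintro ⟨v₁, rfl⟩
    obtain ⟨w, hw, hp⟩ := h₁nd v₁
    exact ⟨w, hw, hp.lift Sum.inl fun a b h => Or.inl ⟨a, b, h, rfl, rfl⟩⟩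
  · rintro ⟨s, _, hp⟩
    induction hp using Relation.ReflTransGen.head_induction_on with
    | refl => exact ⟨s, rfl⟩
    | head h _ ih =>
      obtain ⟨v, rfl⟩ := ih
      obtain ⟨u, _, rfl⟩ := (adjA_inl_iff h₁cf h₂cf).mp h
      exact ⟨u, rfl⟩

lemma amal_range_emb₂ (h₁cf : N₁.ClonesFree) (h₂cf : N₂.ClonesFree)
    (h₂nd : N₂.NonDegenerate) :
    Set.range (emb₂ : N₂.V → AV N₁ N₂) =
      {x : AV N₁ N₂ | ∃ s ∈ N₂.out,
        Relation.ReflTransGen (amal N₁ N₂ h₁cf h₂cf).Adj x (emb₂ s)} := by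
  ext x
  constructor
  · rintro ⟨v₂, rfl⟩
    obtain ⟨w, hw, hp⟩ := h₂nd v₂
    exact ⟨w, hw, hp.lift emb₂ fun a b h => Or.inr ⟨a, b, h, rfl, rfl⟩⟩
  · rintro ⟨s, _, hp⟩
    induction hp using Relation.ReflTransGen.head_induction_on with
    | refl => exact ⟨s, rfl⟩
    | head h _ ih =>
      obtain ⟨v, rfl⟩ := ih
      obtain ⟨u, _, rfl⟩ := (adjA_emb₂_iff h₁cf h₂cf).mp h
      exact ⟨u, rfl⟩

lemma amal_cover (h₁cf : N₁.ClonesFree) (h₂cf : N₂.ClonesFree) :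
    Set.range (Sum.inl : N₁.V → AV N₁ N₂) ∪ Set.range (emb₂ : N₂.V → AV N₁ N₂) =
      Set.univ := by
  ext x
  simp only [Set.mem_union, Set.mem_univ, iff_true]
  rcases x with v₁ | ⟨v₂, hun⟩
  · exact Or.inl ⟨v₁, rfl⟩
  · exact Or.inr ⟨v₂, emb₂_not_matched hun⟩

/-- mixed clones in the amalgam are impossible -/
lemma amal_no_mixed_clone (h₁cf : N₁.ClonesFree) (h₂cf : N₂.ClonesFree)
    (h₁L : N₁.Layered) (h₂L : N₂.Layered) {v₁ : N₁.V} {v₂ : N₂.V} (hun : ¬ Matched N₁ v₂)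
    (hpar : ∀ u, (amal N₁ N₂ h₁cf h₂cf).Adj u (Sum.inl v₁) ↔
        (amal N₁ N₂ h₁cf h₂cf).Adj u (emb₂ v₂))
    (hbias : N₁.bias v₁ = N₂.bias v₂)
    (hwt : ∀ u, (amal N₁ N₂ h₁cf h₂cf).Adj u (Sum.inl v₁) →
        (amal N₁ N₂ h₁cf h₂cf).wt (Sum.inl v₁) u = (amal N₁ N₂ h₁cf h₂cf).wt (emb₂ v₂) u) :
    False := by
  set A := amal N₁ N₂ h₁cf h₂cf with hA
  -- v₂ is not a source
  have hv₂ns : N₂.lv v₂ ≠ 0 := by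
    intro h0
    obtain ⟨i, hi⟩ := N₂.lv_eq_zero_iff.mp h0
    exact hun ⟨0, N₁.inp i, i, rfl, hi.symm⟩
  obtain ⟨u₂0, hu₂0, _⟩ := N₂.exists_parent_of_lv_pos hv₂ns
  -- levels agree
  have hlv : N₁.lv v₁ = N₂.lv v₂ := by
    have h1 : A.Adj (emb₂ u₂0) (emb₂ v₂) := Or.inr ⟨u₂0, v₂, hu₂0, rfl, rfl⟩
    have h2 : A.Adj (emb₂ u₂0) (Sum.inl v₁) := (hpar _).mpr h1
    have hL := amal_layered h₁cf h₂cf h₁L h₂L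
    have e1 := hL _ _ h1
    have e2 := hL _ _ h2
    rw [amal_lv_inl, amal_lv_emb₂] at e2
    rw [amal_lv_emb₂, amal_lv_emb₂] at e1
    omega
  obtain ⟨k, hk⟩ : ∃ k, N₂.lv v₂ = k + 1 := ⟨N₂.lv v₂ - 1, by omega⟩
  apply hun
  refine ⟨k + 1, v₁, hlv.trans hk, hk, hbias, ?_, ?_⟩
  · intro u₁ hu₁
    have h1 : A.Adj (Sum.inl u₁) (Sum.inl v₁) := Or.inl ⟨u₁, v₁, hu₁, rfl, rfl⟩
    have h2 := (hpar _).mp h1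
    obtain ⟨u₂, hA₂, he⟩ := (adjA_emb₂_iff h₁cf h₂cf).mp h2
    obtain ⟨m, hm⟩ := (emb₂_eq_inl_iff h₁cf h₂cf).mp he.symm
    have hmk : m = k := by
      have := hm.n_eq
      have := h₂L u₂ v₂ hA₂
      omega
    refine ⟨u₂, hA₂, hmk ▸ hm, ?_⟩
    have e1 : A.wt (Sum.inl v₁) (Sum.inl u₁) = N₁.wt v₁ u₁ := wtA_inl h₁cf h₂cf hu₁
    have e2 : A.wt (emb₂ v₂) (emb₂ u₂) = N₂.wt v₂ u₂ := wtA_emb₂ h₁cf h₂cf hA₂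
    rw [← e1, ← e2, ← he]
    exact hwt _ h1
  · intro u₂ hu₂
    have h2 : A.Adj (emb₂ u₂) (emb₂ v₂) := Or.inr ⟨u₂, v₂, hu₂, rfl, rfl⟩
    have h1 := (hpar _).mpr h2
    obtain ⟨u₁, hA₁, he⟩ := (adjA_inl_iff h₁cf h₂cf).mp h1
    obtain ⟨m, hm⟩ := (emb₂_eq_inl_iff h₁cf h₂cf).mp he
    have hmk : m = k := by
      have := hm.n_eq
      have := h₂L u₂ v₂ hu₂
      omega
    refine ⟨u₁, hA₁, hmk ▸ hm, ?_⟩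
    have e1 : A.wt (Sum.inl v₁) (Sum.inl u₁) = N₁.wt v₁ u₁ := wtA_inl h₁cf h₂cf hA₁
    have e2 : A.wt (emb₂ v₂) (emb₂ u₂) = N₂.wt v₂ u₂ := wtA_emb₂ h₁cf h₂cf hu₂
    rw [he] at h1
    rw [← e1, ← e2, he]
    exact hwt _ h1

lemma amal_clonesFree (h₁cf : N₁.ClonesFree) (h₂cf : N₂.ClonesFree)
    (h₁L : N₁.Layered) (h₂L : N₂.Layered) : (amal N₁ N₂ h₁cf h₂cf).ClonesFree := by
  set A := amal N₁ N₂ h₁cf h₂cf with hA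
  rintro ⟨x, y, hne, hpar, hbias, hwt⟩
  rcases x with a | ⟨a, ha⟩ <;> rcases y with b | ⟨b, hb⟩
  · -- both in N₁
    refine h₁cf ⟨a, b, fun h => hne (congrArg Sum.inl h), fun u => ?_, hbias, fun u hu => ?_⟩
    · constructor
      · intro h
        obtain ⟨u', h', he⟩ := (adjA_inl_iff h₁cf h₂cf).mp
            ((hpar (Sum.inl u)).mp (Or.inl ⟨u, a, h, rfl, rfl⟩))
        rwa [← Sum.inl.inj he] at h'
      · intro h
        obtain ⟨u', h', he⟩ := (adjA_inl_iff h₁cf h₂cf).mp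
            ((hpar (Sum.inl u)).mpr (Or.inl ⟨u, b, h, rfl, rfl⟩))
        rwa [← Sum.inl.inj he] at h'
    · have h2 : N₁.Adj u b := by
        obtain ⟨u', h', he⟩ := (adjA_inl_iff h₁cf h₂cf).mp
            ((hpar (Sum.inl u)).mp (Or.inl ⟨u, a, hu, rfl, rfl⟩))
        rwa [← Sum.inl.inj he] at h'
      have e1 := wtA_inl (N₂ := N₂) h₁cf h₂cf hu
      have e2 := wtA_inl (N₂ := N₂) h₁cf h₂cf h2
      rw [← e1, ← e2]
      exact hwt _ (Or.inl ⟨u, a, hu, rfl, rfl⟩)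
  · -- x in N₁, y genuinely in N₂
    have hyb : (Sum.inr ⟨b, hb⟩ : AV N₁ N₂) = emb₂ b := (emb₂_not_matched hb).symm
    rw [hyb] at hpar hwt
    exact amal_no_mixed_clone h₁cf h₂cf h₁L h₂L hb hpar hbias hwt
  · -- x genuinely in N₂, y in N₁
    have hxa : (Sum.inr ⟨a, ha⟩ : AV N₁ N₂) = emb₂ a := (emb₂_not_matched ha).symm
    rw [hxa] at hpar hwt
    exact amal_no_mixed_clone h₁cf h₂cf h₁L h₂L ha (fun u => (hpar u).symm) hbias.symm
      (fun u hu => (hwt u ((hpar u).mpr hu)).symm)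
  · -- both genuinely in N₂
    have hxa : (Sum.inr ⟨a, ha⟩ : AV N₁ N₂) = emb₂ a := (emb₂_not_matched ha).symm
    have hyb : (Sum.inr ⟨b, hb⟩ : AV N₁ N₂) = emb₂ b := (emb₂_not_matched hb).symm
    rw [hxa, hyb] at hpar hwt hne
    refine h₂cf ⟨a, b, fun h => hne (congrArg emb₂ h), fun u => ?_, hbias, fun u hu => ?_⟩
    · constructor
      · intro h
        obtain ⟨u', h', he⟩ := (adjA_emb₂_iff h₁cf h₂cf).mp
            ((hpar (emb₂ u)).mp (Or.inr ⟨u, a, h, rfl, rfl⟩))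
        rwa [← emb₂_inj h₁cf h₂cf he] at h'
      · intro h
        obtain ⟨u', h', he⟩ := (adjA_emb₂_iff h₁cf h₂cf).mp
            ((hpar (emb₂ u)).mpr (Or.inr ⟨u, b, h, rfl, rfl⟩))
        rwa [← emb₂_inj h₁cf h₂cf he] at h'
    · have h2 : N₂.Adj u b := by
        obtain ⟨u', h', he⟩ := (adjA_emb₂_iff h₁cf h₂cf).mp
            ((hpar (emb₂ u)).mp (Or.inr ⟨u, a, hu, rfl, rfl⟩))
        rwa [← emb₂_inj h₁cf h₂cf he] at h'
      have e1 := wtA_emb₂ h₁cf h₂cf hu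
      have e2 := wtA_emb₂ h₁cf h₂cf h2
      rw [← e1, ← e2]
      exact hwt _ (Or.inr ⟨u, a, hu, rfl, rfl⟩)

lemma amal_bias_emb₂ (h₁cf : N₁.ClonesFree) (h₂cf : N₂.ClonesFree) {v : N₂.V}
    (hv : v ∉ Set.range N₂.inp) :
    (amal N₁ N₂ h₁cf h₂cf).bias (emb₂ v) = N₂.bias v := by
  by_cases h : Matched N₁ v
  · rw [emb₂_matched h]
    show N₁.bias (mate h) = N₂.bias v
    have hm := mate_spec h
    have hns : N₂.lv v ≠ 0 := fun h0 => hv (N₂.lv_eq_zero_iff.mp h0)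
    obtain ⟨k, hk⟩ : ∃ k, N₂.lv v = k + 1 := ⟨N₂.lv v - 1, by omega⟩
    rw [hk] at hm
    exact hm.2.2.1
  · rw [emb₂_not_matched h]; rfl

end GFNN

namespace GFNN
variable {ι : Type} {N₁ N₂ A : GFNN ι} {π₁ : N₁.V → A.V} {π₂ : N₂.V → A.V}

lemma proto_parents₁
    (hr1 : Set.range π₁ = {x : A.V | ∃ s ∈ N₁.out, Relation.ReflTransGen A.Adj x (π₁ s)})
    (ha1 : ∀ u v, N₁.Adj u v ↔ A.Adj (π₁ u) (π₁ v)) {x : A.V} {v : N₁.V} :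
    A.Adj x (π₁ v) ↔ ∃ u, N₁.Adj u v ∧ x = π₁ u := by
  constructor
  · intro hx
    have hv : π₁ v ∈ Set.range π₁ := ⟨v, rfl⟩
    rw [hr1] at hv
    obtain ⟨s, hs, hpath⟩ := hv
    have hxm : x ∈ Set.range π₁ := by
      rw [hr1]; exact ⟨s, hs, Relation.ReflTransGen.head hx hpath⟩
    obtain ⟨u, rfl⟩ := hxm
    exact ⟨u, (ha1 u v).mpr hx, rfl⟩
  · rintro ⟨u, hu, rfl⟩; exact (ha1 u v).mp hu

lemma proto_parents₂
    (hr2 : Set.range π₂ = {x : A.V | ∃ s ∈ N₂.out, Relation.ReflTransGen A.Adj x (π₂ s)})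
    (ha2 : ∀ u v, N₂.Adj u v ↔ A.Adj (π₂ u) (π₂ v)) {x : A.V} {v : N₂.V} :
    A.Adj x (π₂ v) ↔ ∃ u, N₂.Adj u v ∧ x = π₂ u := by
  constructor
  · intro hx
    have hv : π₂ v ∈ Set.range π₂ := ⟨v, rfl⟩
    rw [hr2] at hv
    obtain ⟨s, hs, hpath⟩ := hv
    have hxm : x ∈ Set.range π₂ := by
      rw [hr2]; exact ⟨s, hs, Relation.ReflTransGen.head hx hpath⟩
    obtain ⟨u, rfl⟩ := hxm
    exact ⟨u, (ha2 u v).mpr hx, rfl⟩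
  · rintro ⟨u, hu, rfl⟩; exact (ha2 u v).mp hu

lemma proto_lv₁
    (hr1 : Set.range π₁ = {x : A.V | ∃ s ∈ N₁.out, Relation.ReflTransGen A.Adj x (π₁ s)})
    (ha1 : ∀ u v, N₁.Adj u v ↔ A.Adj (π₁ u) (π₁ v)) :
    ∀ v, A.lv (π₁ v) = N₁.lv v := by
  intro v
  induction v using N₁.wf.induction with
  | _ v ih =>
    refine A.lv_eq_of N₁ (fun u hu => ?_) (fun w hw => ?_)
    · obtain ⟨w, hw, rfl⟩ := (proto_parents₁ hr1 ha1).mp hu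
      exact ⟨w, hw, ih w hw⟩
    · exact ⟨π₁ w, (ha1 w v).mp hw, ih w hw⟩

lemma proto_lv₂
    (hr2 : Set.range π₂ = {x : A.V | ∃ s ∈ N₂.out, Relation.ReflTransGen A.Adj x (π₂ s)})
    (ha2 : ∀ u v, N₂.Adj u v ↔ A.Adj (π₂ u) (π₂ v)) :
    ∀ v, A.lv (π₂ v) = N₂.lv v := by
  intro v
  induction v using N₂.wf.induction with
  | _ v ih =>
    refine A.lv_eq_of N₂ (fun u hu => ?_) (fun w hw => ?_)
    · obtain ⟨w, hw, rfl⟩ := (proto_parents₂ hr2 ha2).mp hu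
      exact ⟨w, hw, ih w hw⟩
    · exact ⟨π₂ w, (ha2 w v).mp hw, ih w hw⟩

/-- The key rigidity lemma: in a clones-free proto-amalgam, identifications are
exactly given by the `Match` relation. -/
lemma proto_key (h : IsProtoAmalgam N₁ N₂ A π₁ π₂) (hcf : A.ClonesFree)
    (h₁L : N₁.Layered) (h₂L : N₂.Layered) :
    ∀ (n : ℕ) (v₁ : N₁.V) (v₂ : N₂.V), N₁.lv v₁ = n →
      (π₁ v₁ = π₂ v₂ ↔ Match N₁ N₂ n v₁ v₂) := by
  obtain ⟨hL, hnd, hi1, hi2, hp1, hp2, ha1, ha2, hw1, hw2, hb1, hb2, hr1, hr2, hcov, hout⟩ := h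
  intro n
  induction n using Nat.strong_induction_on with
  | _ n ih =>
    intro v₁ v₂ hlv
    constructor
    · intro heq
      cases n with
      | zero =>
        obtain ⟨i, hi⟩ := N₁.lv_eq_zero_iff.mp hlv
        refine ⟨i, hi.symm, ?_⟩
        apply hi2
        rw [hp2 i, ← heq, ← hi, hp1 i]
      | succ k =>
        have hlv₂ : N₂.lv v₂ = k + 1 := by
          rw [← proto_lv₂ hr2 ha2 v₂, ← heq, proto_lv₁ hr1 ha1 v₁, hlv]
        have hns₁ : v₁ ∉ Set.range N₁.inp := fun hin =>
          by have := N₁.lv_eq_zero_iff.mpr hin; omega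
        have hns₂ : v₂ ∉ Set.range N₂.inp := fun hin =>
          by have := N₂.lv_eq_zero_iff.mpr hin; omega
        refine ⟨hlv, hlv₂, ?_, ?_, ?_⟩
        · rw [← hb1 v₁ hns₁, ← hb2 v₂ hns₂, heq]
        · intro u₁ hu₁
          have hadj : A.Adj (π₁ u₁) (π₂ v₂) := heq ▸ (ha1 u₁ v₁).mp hu₁
          obtain ⟨u₂, hu₂, he⟩ := (proto_parents₂ hr2 ha2).mp hadj
          have hlvu : N₁.lv u₁ = k := by have := h₁L u₁ v₁ hu₁; omega
          refine ⟨u₂, hu₂, (ih k (by omega) u₁ u₂ hlvu).mp he, ?_⟩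
          rw [← hw1 u₁ v₁ hu₁, ← hw2 u₂ v₂ hu₂, heq, he]
        · intro u₂ hu₂
          have hadj : A.Adj (π₂ u₂) (π₁ v₁) := heq ▸ (ha2 u₂ v₂).mp hu₂
          obtain ⟨u₁, hu₁, he⟩ := (proto_parents₁ hr1 ha1).mp hadj
          have hlvu : N₁.lv u₁ = k := by have := h₁L u₁ v₁ hu₁; omega
          refine ⟨u₁, hu₁, (ih k (by omega) u₁ u₂ hlvu).mp he.symm, ?_⟩
          rw [← hw1 u₁ v₁ hu₁, ← hw2 u₂ v₂ hu₂, heq, he]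
    · intro hm
      cases n with
      | zero =>
        obtain ⟨i, rfl, rfl⟩ := hm
        rw [hp1 i, hp2 i]
      | succ k =>
        by_contra hne
        have hlv₂ : N₂.lv v₂ = k + 1 := hm.lv.2
        have hns₁ : v₁ ∉ Set.range N₁.inp := fun hin =>
          by have := N₁.lv_eq_zero_iff.mpr hin; omega
        have hns₂ : v₂ ∉ Set.range N₂.inp := fun hin =>
          by have := N₂.lv_eq_zero_iff.mpr hin; omega
        obtain ⟨_, _, hbias, hf, hg⟩ := hm
        refine hcf ⟨π₁ v₁, π₂ v₂, hne, fun z => ?_, ?_, fun z hz => ?_⟩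
        · constructor
          · intro hz
            obtain ⟨u₁, hu₁, rfl⟩ := (proto_parents₁ hr1 ha1).mp hz
            obtain ⟨u₂, hu₂, hm', _⟩ := hf u₁ hu₁
            have hlvu : N₁.lv u₁ = k := by have := h₁L u₁ v₁ hu₁; omega
            rw [(ih k (by omega) u₁ u₂ hlvu).mpr hm']
            exact (ha2 u₂ v₂).mp hu₂
          · intro hz
            obtain ⟨u₂, hu₂, rfl⟩ := (proto_parents₂ hr2 ha2).mp hz
            obtain ⟨u₁, hu₁, hm', _⟩ := hg u₂ hu₂
            have hlvu : N₁.lv u₁ = k := by have := h₁L u₁ v₁ hu₁; omega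
            rw [← (ih k (by omega) u₁ u₂ hlvu).mpr hm']
            exact (ha1 u₁ v₁).mp hu₁
        · rw [hb1 v₁ hns₁, hb2 v₂ hns₂, hbias]
        · obtain ⟨u₁, hu₁, rfl⟩ := (proto_parents₁ hr1 ha1).mp hz
          obtain ⟨u₂, hu₂, hm', hwt⟩ := hf u₁ hu₁
          have hlvu : N₁.lv u₁ = k := by have := h₁L u₁ v₁ hu₁; omega
          have hpe := (ih k (by omega) u₁ u₂ hlvu).mpr hm'
          rw [hw1 u₁ v₁ hu₁, hpe, hw2 u₂ v₂ hu₂, hwt]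

end GFNN

namespace GFNN
variable {ι : Type} {N₁ N₂ : GFNN ι}

theorem amal_isAmalgam (h₁L : N₁.Layered) (h₂L : N₂.Layered)
    (h₁nd : N₁.NonDegenerate) (h₂nd : N₂.NonDegenerate)
    (h₁cf : N₁.ClonesFree) (h₂cf : N₂.ClonesFree) :
    IsAmalgam N₁ N₂ (amal N₁ N₂ h₁cf h₂cf) Sum.inl emb₂ := by
  refine ⟨⟨amal_layered h₁cf h₂cf h₁L h₂L, amal_nondeg h₁cf h₂cf h₁nd h₂nd,
    fun a b h => Sum.inl.inj h, emb₂_inj h₁cf h₂cf,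
    fun i => rfl, emb₂_inp h₁cf h₂cf, ?_, ?_, ?_, ?_,
    fun v _ => rfl, fun v hv => amal_bias_emb₂ h₁cf h₂cf hv,
    amal_range_inl h₁cf h₂cf h₁nd, amal_range_emb₂ h₁cf h₂cf h₂nd,
    amal_cover h₁cf h₂cf, rfl⟩, amal_clonesFree h₁cf h₂cf h₁L h₂L⟩
  · intro u v
    constructor
    · intro h; exact Or.inl ⟨u, v, h, rfl, rfl⟩
    · intro h
      obtain ⟨u', h', he⟩ := (adjA_inl_iff h₁cf h₂cf).mp h
      rwa [← Sum.inl.inj he] at h'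
  · intro u v
    constructor
    · intro h; exact Or.inr ⟨u, v, h, rfl, rfl⟩
    · intro h
      obtain ⟨u', h', he⟩ := (adjA_emb₂_iff h₁cf h₂cf).mp h
      rwa [← emb₂_inj h₁cf h₂cf he] at h'
  · exact fun u v h => wtA_inl h₁cf h₂cf h
  · exact fun u v h => wtA_emb₂ h₁cf h₂cf h

variable {A A' : GFNN ι}

open Classical in
/-- the canonical map between two proto-amalgams -/
noncomputable def protoMap (π₁ : N₁.V → A.V) (π₂ : N₂.V → A.V)
    (π₁' : N₁.V → A'.V) (π₂' : N₂.V → A'.V)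
    (hcov : Set.range π₁ ∪ Set.range π₂ = Set.univ) : A.V → A'.V := fun x =>
  if h : ∃ v₁, π₁ v₁ = x then π₁' h.choose
  else π₂' (show ∃ v₂, π₂ v₂ = x by
    have hx : x ∈ Set.range π₁ ∪ Set.range π₂ := hcov ▸ Set.mem_univ x
    rcases hx with hx | hx
    · exact absurd hx h
    · exact hx).choose

lemma protoMap_π₁ {π₁ : N₁.V → A.V} {π₂ : N₂.V → A.V}
    {π₁' : N₁.V → A'.V} {π₂' : N₂.V → A'.V}
    (hi1 : Function.Injective π₁) (hcov : Set.range π₁ ∪ Set.range π₂ = Set.univ) (v : N₁.V) :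
    protoMap π₁ π₂ π₁' π₂' hcov (π₁ v) = π₁' v := by
  unfold protoMap
  rw [dif_pos ⟨v, rfl⟩]
  exact congrArg π₁' (hi1 (Exists.choose_spec (⟨v, rfl⟩ : ∃ u, π₁ u = π₁ v)))

lemma protoMap_π₂ {π₁ : N₁.V → A.V} {π₂ : N₂.V → A.V}
    {π₁' : N₁.V → A'.V} {π₂' : N₂.V → A'.V}
    (hi2 : Function.Injective π₂) (hcov : Set.range π₁ ∪ Set.range π₂ = Set.univ)
    (hkey : ∀ v₁ v₂, π₁ v₁ = π₂ v₂ → π₁' v₁ = π₂' v₂) (v : N₂.V) :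
    protoMap π₁ π₂ π₁' π₂' hcov (π₂ v) = π₂' v := by
  unfold protoMap
  by_cases h : ∃ v₁, π₁ v₁ = π₂ v
  · rw [dif_pos h]
    exact hkey _ _ h.choose_spec
  · rw [dif_neg h]
    refine congrArg π₂' (hi2 ?_)
    exact Exists.choose_spec (show ∃ u, π₂ u = π₂ v from ⟨v, rfl⟩)

/-- the main uniqueness theorem -/
theorem amalgam_unique (h₁L : N₁.Layered) (h₂L : N₂.Layered)
    {π₁ : N₁.V → A.V} {π₂ : N₂.V → A.V} {π₁' : N₁.V → A'.V} {π₂' : N₂.V → A'.V}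
    (hA : IsAmalgam N₁ N₂ A π₁ π₂) (hA' : IsAmalgam N₁ N₂ A' π₁' π₂') :
    ∃ e : A.V → A'.V, IsExtIso A A' e := by
  obtain ⟨hP, hcf⟩ := hA
  obtain ⟨hP', hcf'⟩ := hA'
  have hkey := proto_key hP hcf h₁L h₂L
  have hkey' := proto_key hP' hcf' h₁L h₂L
  have key_transfer : ∀ v₁ v₂, π₁ v₁ = π₂ v₂ → π₁' v₁ = π₂' v₂ := fun v₁ v₂ h =>
    (hkey' _ v₁ v₂ rfl).mpr ((hkey _ v₁ v₂ rfl).mp h)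
  have key_transfer' : ∀ v₁ v₂, π₁' v₁ = π₂' v₂ → π₁ v₁ = π₂ v₂ := fun v₁ v₂ h =>
    (hkey _ v₁ v₂ rfl).mpr ((hkey' _ v₁ v₂ rfl).mp h)
  obtain ⟨hL, hnd, hi1, hi2, hp1, hp2, ha1, ha2, hw1, hw2, hb1, hb2, hr1, hr2, hcov, hout⟩ := hP
  obtain ⟨hL', hnd', hi1', hi2', hp1', hp2', ha1', ha2', hw1', hw2', hb1', hb2', hr1', hr2',
    hcov', hout'⟩ := hP'
  set e := protoMap π₁ π₂ π₁' π₂' hcov with he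
  set e' := protoMap π₁' π₂' π₁ π₂ hcov' with he'
  have he1 : ∀ v, e (π₁ v) = π₁' v := protoMap_π₁ hi1 hcov
  have he2 : ∀ v, e (π₂ v) = π₂' v := protoMap_π₂ hi2 hcov key_transfer
  have he1' : ∀ v, e' (π₁' v) = π₁ v := protoMap_π₁ hi1' hcov'
  have he2' : ∀ v, e' (π₂' v) = π₂ v := protoMap_π₂ hi2' hcov' key_transfer'
  have hmem : ∀ x : A.V, (∃ v, π₁ v = x) ∨ ∃ v, π₂ v = x := by
    intro x
    have hx : x ∈ Set.range π₁ ∪ Set.range π₂ := hcov ▸ Set.mem_univ x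
    exact hx
  have hmem' : ∀ x : A'.V, (∃ v, π₁' v = x) ∨ ∃ v, π₂' v = x := by
    intro x
    have hx : x ∈ Set.range π₁' ∪ Set.range π₂' := hcov' ▸ Set.mem_univ x
    exact hx
  have hli : Function.LeftInverse e' e := by
    intro x
    rcases hmem x with ⟨v, rfl⟩ | ⟨v, rfl⟩
    · rw [he1, he1']
    · rw [he2, he2']
  have hri : Function.RightInverse e' e := by
    intro x
    rcases hmem' x with ⟨v, rfl⟩ | ⟨v, rfl⟩
    · rw [he1', he1]
    · rw [he2', he2]
  have hbij : Function.Bijective e := Function.bijective_iff_has_inverse.mpr ⟨e', hli, hri⟩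
  -- one-directional adjacency transfer
  have hadj : ∀ x y, A.Adj x y → A'.Adj (e x) (e y) := by
    intro x y hxy
    rcases hmem y with ⟨v, rfl⟩ | ⟨v, rfl⟩
    · obtain ⟨u, hu, rfl⟩ := (proto_parents₁ hr1 ha1).mp hxy
      rw [he1, he1]
      exact (ha1' u v).mp hu
    · obtain ⟨u, hu, rfl⟩ := (proto_parents₂ hr2 ha2).mp hxy
      rw [he2, he2]
      exact (ha2' u v).mp hu
  have hadj' : ∀ x y, A'.Adj x y → A.Adj (e' x) (e' y) := by
    intro x y hxy
    rcases hmem' y with ⟨v, rfl⟩ | ⟨v, rfl⟩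
    · obtain ⟨u, hu, rfl⟩ := (proto_parents₁ hr1' ha1').mp hxy
      rw [he1', he1']
      exact (ha1 u v).mp hu
    · obtain ⟨u, hu, rfl⟩ := (proto_parents₂ hr2' ha2').mp hxy
      rw [he2', he2']
      exact (ha2 u v).mp hu
  refine ⟨e, hbij, ?_, ?_, ?_, ?_, ?_⟩
  · intro i
    rw [← hp1 i, he1, hp1' i]
  · rw [hout, hout', Set.image_union]
    congr 1
    · rw [← Set.image_comp]
      exact congrArg (fun f => Set.image f N₁.out) (funext fun v => he1 v)
    · rw [← Set.image_comp]
      exact congrArg (fun f => Set.image f N₂.out) (funext fun v => he2 v)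
  · intro u v
    refine ⟨hadj u v, fun h => ?_⟩
    have := hadj' _ _ h
    rwa [hli u, hli v] at this
  · intro x y hxy
    rcases hmem y with ⟨v, rfl⟩ | ⟨v, rfl⟩
    · obtain ⟨u, hu, rfl⟩ := (proto_parents₁ hr1 ha1).mp hxy
      rw [he1, he1, hw1' u v hu, hw1 u v hu]
    · obtain ⟨u, hu, rfl⟩ := (proto_parents₂ hr2 ha2).mp hxy
      rw [he2, he2, hw2' u v hu, hw2 u v hu]
  · intro x hx
    rcases hmem x with ⟨v, rfl⟩ | ⟨v, rfl⟩
    · have hv : v ∉ Set.range N₁.inp := by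
        rintro ⟨i, rfl⟩
        exact hx ⟨i, (hp1 i).symm⟩
      rw [he1, hb1' v hv, hb1 v hv]
    · have hv : v ∉ Set.range N₂.inp := by
        rintro ⟨i, rfl⟩
        exact hx ⟨i, (hp2 i).symm⟩
      rw [he2, hb2' v hv, hb2 v hv]

end GFNN

/-- Existence and uniqueness (up to extensional isomorphism) of the amalgam of two
non-degenerate clones-free layered networks with the same input set. -/
theorem amalgam_exists_unique {ι : Type} (N₁ N₂ : GFNN ι)
    (h₁L : N₁.Layered) (h₂L : N₂.Layered)
    (h₁nd : N₁.NonDegenerate) (h₂nd : N₂.NonDegenerate)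
    (h₁cf : N₁.ClonesFree) (h₂cf : N₂.ClonesFree) :
    (∃ (A : GFNN ι) (π₁ : N₁.V → A.V) (π₂ : N₂.V → A.V), IsAmalgam N₁ N₂ A π₁ π₂) ∧
    (∀ (A A' : GFNN ι) (π₁ : N₁.V → A.V) (π₂ : N₂.V → A.V)
        (π₁' : N₁.V → A'.V) (π₂' : N₂.V → A'.V),
      IsAmalgam N₁ N₂ A π₁ π₂ → IsAmalgam N₁ N₂ A' π₁' π₂' →
      ∃ e : A.V → A'.V, IsExtIso A A' e) := by
  constructor
  · exact ⟨GFNN.amal N₁ N₂ h₁cf h₂cf, Sum.inl, GFNN.emb₂,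
      GFNN.amal_isAmalgam h₁L h₂L h₁nd h₂nd h₁cf h₂cf⟩
  · intro A A' π₁ π₂ π₁' π₂' hA hA'
    exact GFNN.amalgam_unique h₁L h₂L hA hA'
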